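/- arXiv:0901.3103 — 3 statements merged into one kernel-verified Lean document; each statement's English description precedes it below -/
import Mathlib

section
/- Let k be a commutative ring, A a non-degenerate idempotent k-algebra that is projective as a k-module, B a k-algebra, and f : B → M(A) an algebra homomorphism into the multiplier algebra such that A, with the actions b·a := λ_{f(b)}(a) and a·b := ρ_{f(b)}(a), is non-degenerate and idempotent both as a left and as a right B-module. Then every non-degenerate idempotent right A-module M becomes a non-degenerate idempotent right B-module via m·b := m◁f(b), where ◁ denotes the induced right M(A)-action on M (m◁(λ,ρ) := Σᵢ mᵢ·ρ(aᵢ) for any representation m = Σᵢ mᵢ·aᵢ). -/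
variable (k : Type*) [CommRing k]
variable (A : Type*) [NonUnitalRing A] [Module k A] [SMulCommClass k A A] [IsScalarTower k A A]
variable (B : Type*) [NonUnitalRing B] [Module k B] [SMulCommClass k B B] [IsScalarTower k B B]

/-- `(l, r)` is a multiplier of `A`. -/
def IsMultiplier (l r : A →ₗ[k] A) : Prop :=
  (∀ a b : A, l (a * b) = l a * b) ∧
  (∀ a b : A, r (a * b) = a * r b) ∧
  (∀ a b : A, a * l b = r a * b)

/-- The multiplier product `(λ₁,ρ₁)(λ₂,ρ₂) = (λ₁∘λ₂, ρ₂∘ρ₁)`. -/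
def mulPair (x y : (A →ₗ[k] A) × (A →ₗ[k] A)) : (A →ₗ[k] A) × (A →ₗ[k] A) :=
  (x.1 ∘ₗ y.1, y.2 ∘ₗ x.2)

/-- Let `A` be a non-degenerate idempotent k-projective algebra and
`f : B → M(A)` an algebra homomorphism such that `A`, with the `B`-actions
`b·a := λ_{f(b)}(a)` and `a·b := ρ_{f(b)}(a)`, is non-degenerate and idempotent as a left
and as a right `B`-module.  Then any non-degenerate idempotent right `A`-module `M` becomes
a non-degenerate idempotent right `B`-module via `m·b := m ◁ f(b)`, where `◁` is the induced
right `M(A)`-action (given on representations by `m ◁ (λ,ρ) = Σ mᵢ·ρ(aᵢ)`). -/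
theorem stmt_9 (M : Type*) [AddCommGroup M] [Module k M]
    [Module.Projective k A]
    -- `A` is a non-degenerate idempotent algebra
    (hAnd₁ : ∀ a : A, (∀ b : A, a * b = 0) → a = 0)
    (hAnd₂ : ∀ a : A, (∀ b : A, b * a = 0) → a = 0)
    (hAid : ∀ a : A, a ∈ AddSubmonoid.closure {x : A | ∃ b c : A, x = b * c})
    -- `f : B → M(A)` is an algebra homomorphism
    (f : B →ₗ[k] (A →ₗ[k] A) × (A →ₗ[k] A))
    (hfmult : ∀ b : B, IsMultiplier k A (f b).1 (f b).2)
    (hfhom : ∀ b b' : B, f (b * b') = mulPair k A (f b) (f b'))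
    -- the induced `B`-bimodule structure on `A` is non-degenerate and idempotent
    (hBnd₁ : ∀ a : A, (∀ b : B, (f b).2 a = 0) → a = 0)
    (hBnd₂ : ∀ a : A, (∀ b : B, (f b).1 a = 0) → a = 0)
    (hBid₁ : ∀ a : A, a ∈ AddSubmonoid.closure {x : A | ∃ (b : B) (y : A), x = (f b).1 y})
    (hBid₂ : ∀ a : A, a ∈ AddSubmonoid.closure {x : A | ∃ (b : B) (y : A), x = (f b).2 y})
    -- `M` is a non-degenerate idempotent right `A`-module
    (act : M →ₗ[k] A →ₗ[k] M)
    (hassoc : ∀ (m : M) (a a' : A), act (act m a) a' = act m (a * a'))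
    (hMnd : ∀ m : M, (∀ a : A, act m a = 0) → m = 0)
    (hMid : ∀ m : M, m ∈ AddSubmonoid.closure {x : M | ∃ (m' : M) (a : A), x = act m' a})
    -- the induced right `B`-action `m·b := m ◁ f(b)`
    (actB : M → B → M)
    (hactB : ∀ (m : M) (b : B) (L : List (M × A)),
      (L.map fun p => act p.1 p.2).sum = m →
        actB m b = (L.map fun p => act p.1 ((f b).2 p.2)).sum) :
    -- `actB` makes `M` a right `B`-module ...
    (∀ (m : M) (b b' : B), actB (actB m b) b' = actB m (b * b')) ∧
    (∀ (m m' : M) (b : B), actB (m + m') b = actB m b + actB m' b) ∧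
    (∀ (m : M) (b b' : B), actB m (b + b') = actB m b + actB m b') ∧
    (∀ (c : k) (m : M) (b : B), actB (c • m) b = c • actB m b) ∧
    (∀ (c : k) (m : M) (b : B), actB m (c • b) = c • actB m b) ∧
    -- ... which is non-degenerate ...
    (∀ m : M, (∀ b : B, actB m b = 0) → m = 0) ∧
    -- ... and idempotent
    (∀ m : M, m ∈ AddSubmonoid.closure {x : M | ∃ (m' : M) (b : B), x = actB m' b}) := by
  -- every element of `M` has a list representation
  have hex : ∀ m : M, ∃ L : List (M × A), (L.map fun p => act p.1 p.2).sum = m := by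
    intro m
    refine AddSubmonoid.closure_induction ?_ ?_ ?_ (hMid m)
    · rintro x ⟨m', a, rfl⟩
      exact ⟨[(m', a)], by simp⟩
    · exact ⟨[], rfl⟩
    · rintro x y _ _ ⟨L₁, h₁⟩ ⟨L₂, h₂⟩
      exact ⟨L₁ ++ L₂, by simp [h₁, h₂]⟩
  -- key computation
  have key : ∀ (L : List (M × A)) (b : B) (a : A),
      act ((L.map fun p => act p.1 ((f b).2 p.2)).sum) a
        = act ((L.map fun p => act p.1 p.2).sum) ((f b).1 a) := by
    intro L b a
    induction L with
    | nil => simp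
    | cons p L ih =>
        simp only [List.map_cons, List.sum_cons, map_add, LinearMap.add_apply, ih]
        congr 1
        rw [hassoc, hassoc, ← (hfmult b).2.2 p.2 a]
  -- characterization of `actB m b`
  have hchar : ∀ (m : M) (b : B) (a : A), act (actB m b) a = act m ((f b).1 a) := by
    intro m b a
    obtain ⟨L, hL⟩ := hex m
    rw [hactB m b L hL, key, hL]
  -- uniqueness via non-degeneracy
  have huniq : ∀ x y : M, (∀ a : A, act x a = act y a) → x = y := by
    intro x y h
    have : x - y = 0 := hMnd _ (fun a => by
      simp [map_sub, LinearMap.sub_apply, h a])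
    exact sub_eq_zero.mp this
  refine ⟨?_, ?_, ?_, ?_, ?_, ?_, ?_⟩
  · -- associativity of the `B`-action
    intro m b b'
    refine huniq _ _ (fun a => ?_)
    rw [hchar, hchar, hchar, hfhom]
    rfl
  · intro m m' b
    refine huniq _ _ (fun a => ?_)
    simp [hchar, map_add]
  · intro m b b'
    refine huniq _ _ (fun a => ?_)
    have : (f (b + b')).1 a = (f b).1 a + (f b').1 a := by
      rw [map_add]; rfl
    simp [hchar, this, map_add]
  · intro c m b
    refine huniq _ _ (fun a => ?_)
    simp [hchar, map_smul]
  · intro c m b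
    refine huniq _ _ (fun a => ?_)
    have : (f (c • b)).1 a = c • (f b).1 a := by
      rw [map_smul]; rfl
    simp [hchar, this, map_smul]
  · -- non-degeneracy
    intro m hm
    refine hMnd m (fun a => ?_)
    refine AddSubmonoid.closure_induction ?_ ?_ ?_ (hBid₁ a)
    · rintro x ⟨b, y, rfl⟩
      rw [← hchar, hm b]
      simp
    · simp
    · intro x y _ _ hx hy
      rw [map_add, hx, hy, add_zero]
  · -- idempotency
    intro m
    have inner : ∀ (m' : M) (a : A),
        act m' a ∈ AddSubmonoid.closure {x : M | ∃ (n : M) (b : B), x = actB n b} := by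
      intro m' a
      refine AddSubmonoid.closure_induction ?_ ?_ ?_ (hBid₂ a)
      · rintro x ⟨b, y, rfl⟩
        refine AddSubmonoid.subset_closure ⟨act m' y, b, ?_⟩
        rw [hactB (act m' y) b [(m', y)] (by simp)]
        simp
      · simpa using AddSubmonoid.zero_mem _
      · intro x y _ _ hx hy
        rw [map_add]
        exact AddSubmonoid.add_mem _ hx hy
    refine AddSubmonoid.closure_induction ?_ ?_ ?_ (hMid m)
    · rintro x ⟨m', a, rfl⟩
      exact inner m' a
    · exact AddSubmonoid.zero_mem _
    · intro x y _ _ hx hy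
      exact AddSubmonoid.add_mem _ hx hy
end

section
/- Let k be a commutative ring and A, B two non-degenerate idempotent k-algebras that are projective as k-modules. Then the k-algebra A ⊗_k B, with multiplication (a⊗b)(a'⊗b') = aa'⊗bb', is again non-degenerate, idempotent, and projective as a k-module. -/
/-!
Idempotency: if `a = ∑ aᵢ aᵢ'` and `b = ∑ bⱼ bⱼ'`, then `a ⊗ b = ∑ (aᵢ ⊗ bⱼ) (aᵢ' ⊗ bⱼ')`.

Non-degeneracy: if `x (a ⊗ b) = 0` for all `a, b`, then `(R_a ⊗ R_b) x = 0` for the right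
multiplications `R_a`, `R_b`. Tensoring with a projective module preserves the joint injectivity
of a family of linear maps (test against the coordinate functionals of a splitting `P → P →₀ k`),
and the `R_a` are jointly injective on `A`, the `R_b` on `B`; hence `x = 0`.
-/

open TensorProduct

namespace TensorProduct

section Projective

variable {k P M N ι : Type*} [CommSemiring k] [AddCommMonoid P] [Module k P]
  [AddCommMonoid M] [Module k M] [AddCommMonoid N] [Module k N]

theorem eq_zero_of_forall_dual_rTensor_eq_zero [Module.Projective k P] (z : P ⊗[k] M)
    (hz : ∀ φ : Module.Dual k P, TensorProduct.lid k M (φ.rTensor M z) = 0) : z = 0 := by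
  classical
  -- `P` is a retract of `P →₀ k`, and on `(P →₀ k) ⊗ M ≃ (P →₀ M)` the claim is coordinatewise.
  obtain ⟨s, hs⟩ := Module.projective_def'.mp ‹Module.Projective k P›
  have hinj : Function.Injective (finsuppScalarLeft k M P ∘ s.rTensor M) :=
    (finsuppScalarLeft k M P).injective.comp <|
      Function.LeftInverse.injective (g := (Finsupp.linearCombination k id).rTensor M)
        fun x => by rw [← LinearMap.rTensor_comp_apply, hs, LinearMap.rTensor_id_apply]
  refine hinj ?_
  ext j
  simpa [finsuppScalarLeft_apply, ← LinearMap.rTensor_comp_apply] using hz (Finsupp.lapply j ∘ₗ s)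

theorem lid_rTensor_lTensor (φ : Module.Dual k P) (f : M →ₗ[k] N) (z : P ⊗[k] M) :
    TensorProduct.lid k N (φ.rTensor N (f.lTensor P z)) =
      f (TensorProduct.lid k M (φ.rTensor M z)) := by
  induction z using TensorProduct.induction_on with
  | zero => simp
  | tmul p m => simp
  | add u v hu hv => simp only [map_add, hu, hv]

theorem eq_zero_of_forall_lTensor_eq_zero [Module.Projective k P] {f : ι → M →ₗ[k] N}
    (hf : ∀ m, (∀ i, f i m = 0) → m = 0) {z : P ⊗[k] M} (hz : ∀ i, (f i).lTensor P z = 0) :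
    z = 0 :=
  eq_zero_of_forall_dual_rTensor_eq_zero z fun φ => hf _ fun i => by
    rw [← lid_rTensor_lTensor, hz i, map_zero, map_zero]

theorem eq_zero_of_forall_rTensor_eq_zero [Module.Projective k P] {f : ι → M →ₗ[k] N}
    (hf : ∀ m, (∀ i, f i m = 0) → m = 0) {z : M ⊗[k] P} (hz : ∀ i, (f i).rTensor P z = 0) :
    z = 0 := by
  have : TensorProduct.comm k M P z = 0 :=
    eq_zero_of_forall_lTensor_eq_zero hf fun i => by
      rw [← LinearMap.comm_comp_rTensor_comp_comm_eq]
      simp [hz i]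
  simpa using this

theorem eq_zero_of_forall_map_eq_zero {κ : Type*} [Module.Projective k M]
    [Module.Projective k N] {f : ι → M →ₗ[k] M} {g : κ → N →ₗ[k] N}
    (hf : ∀ m, (∀ i, f i m = 0) → m = 0) (hg : ∀ n, (∀ j, g j n = 0) → n = 0)
    {z : M ⊗[k] N} (hz : ∀ i j, map (f i) (g j) z = 0) : z = 0 :=
  eq_zero_of_forall_rTensor_eq_zero hf fun i => eq_zero_of_forall_lTensor_eq_zero hg fun j => by
    rw [← LinearMap.comp_apply, LinearMap.lTensor_comp_rTensor, hz]

end Projective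

theorem tmul_mem_of_mem_closure {k M N : Type*} [CommSemiring k] [AddCommMonoid M] [Module k M]
    [AddCommMonoid N] [Module k N] {S : Set M} {S' : Set N} {T : AddSubmonoid (M ⊗[k] N)}
    (h : ∀ m ∈ S, ∀ n ∈ S', m ⊗ₜ[k] n ∈ T) {m : M} {n : N} (hm : m ∈ AddSubmonoid.closure S)
    (hn : n ∈ AddSubmonoid.closure S') : m ⊗ₜ[k] n ∈ T := by
  induction hm using AddSubmonoid.closure_induction with
  | mem m hm =>
    induction hn using AddSubmonoid.closure_induction with
    | mem n hn => exact h m hm n hn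
    | zero => rw [tmul_zero]; exact zero_mem T
    | add n n' _ _ hn hn' => rw [tmul_add]; exact add_mem hn hn'
  | zero => rw [zero_tmul]; exact zero_mem T
  | add m m' _ _ hm hm' => rw [add_tmul]; exact add_mem hm hm'

end TensorProduct

namespace Algebra.TensorProduct

variable {k A B : Type*} [CommSemiring k]
  [NonUnitalNonAssocSemiring A] [Module k A] [SMulCommClass k A A] [IsScalarTower k A A]
  [NonUnitalNonAssocSemiring B] [Module k B] [SMulCommClass k B B] [IsScalarTower k B B]

theorem map₂_mul_mul_apply (x y : A ⊗[k] B) :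
    map₂ (LinearMap.mul k A) (LinearMap.mul k B) x y = x * y := by
  rw [← mul.eq_1]
  rfl

theorem mem_closure_mul (hA : ∀ a : A, a ∈ AddSubmonoid.closure {x : A | ∃ b c : A, x = b * c})
    (hB : ∀ b : B, b ∈ AddSubmonoid.closure {x : B | ∃ b c : B, x = b * c}) (x : A ⊗[k] B) :
    x ∈ AddSubmonoid.closure {y : A ⊗[k] B | ∃ u v : A ⊗[k] B, y = u * v} := by
  induction x using TensorProduct.induction_on with
  | zero => exact zero_mem _
  | tmul a b =>
    refine tmul_mem_of_mem_closure ?_ (hA a) (hB b)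
    rintro _ ⟨a, a', rfl⟩ _ ⟨b, b', rfl⟩
    exact AddSubmonoid.subset_closure ⟨a ⊗ₜ b, a' ⊗ₜ b', (tmul_mul_tmul a a' b b').symm⟩
  | add x y hx hy => exact add_mem hx hy

variable [Module.Projective k A] [Module.Projective k B]

theorem eq_zero_of_forall_mul_right_eq_zero (hA : ∀ a : A, (∀ b : A, a * b = 0) → a = 0)
    (hB : ∀ a : B, (∀ b : B, a * b = 0) → a = 0) {x : A ⊗[k] B} (hx : ∀ y, x * y = 0) :
    x = 0 :=
  eq_zero_of_forall_map_eq_zero (f := LinearMap.mulRight k) (g := LinearMap.mulRight k)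
    hA hB fun a b => by rw [← LinearMap.mulRight_tmul]; exact hx (a ⊗ₜ b)

theorem eq_zero_of_forall_mul_left_eq_zero (hA : ∀ a : A, (∀ b : A, b * a = 0) → a = 0)
    (hB : ∀ a : B, (∀ b : B, b * a = 0) → a = 0) {x : A ⊗[k] B} (hx : ∀ y, y * x = 0) :
    x = 0 :=
  eq_zero_of_forall_map_eq_zero (f := LinearMap.mulLeft k) (g := LinearMap.mulLeft k)
    hA hB fun a b => by rw [← LinearMap.mulLeft_tmul]; exact hx (a ⊗ₜ b)

end Algebra.TensorProduct

/-- The tensor product of two non-degenerate idempotent k-projective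
(non-unital) k-algebras, with factorwise multiplication `(a⊗b)(a'⊗b') = aa'⊗bb'`, is again
a non-degenerate idempotent k-algebra which is projective as a k-module. -/
theorem stmt_11 (k : Type*) [CommRing k]
    (A : Type*) [NonUnitalRing A] [Module k A] [SMulCommClass k A A] [IsScalarTower k A A]
    (B : Type*) [NonUnitalRing B] [Module k B] [SMulCommClass k B B] [IsScalarTower k B B]
    [Module.Projective k A] [Module.Projective k B]
    (hAnd₁ : ∀ a : A, (∀ b : A, a * b = 0) → a = 0)
    (hAnd₂ : ∀ a : A, (∀ b : A, b * a = 0) → a = 0)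
    (hAid : ∀ a : A, a ∈ AddSubmonoid.closure {x : A | ∃ b c : A, x = b * c})
    (hBnd₁ : ∀ a : B, (∀ b : B, a * b = 0) → a = 0)
    (hBnd₂ : ∀ a : B, (∀ b : B, b * a = 0) → a = 0)
    (hBid : ∀ a : B, a ∈ AddSubmonoid.closure {x : B | ∃ b c : B, x = b * c}) :
    ∀ mulAB : A ⊗[k] B →ₗ[k] A ⊗[k] B →ₗ[k] A ⊗[k] B,
      mulAB = TensorProduct.map₂ (LinearMap.mul k A) (LinearMap.mul k B) →
      -- factorwise multiplication
      (∀ (a a' : A) (b b' : B),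
        mulAB (a ⊗ₜ[k] b) (a' ⊗ₜ[k] b') = (a * a') ⊗ₜ[k] (b * b')) ∧
      -- associativity (so that `A ⊗ B` is a k-algebra)
      (∀ x y z : A ⊗[k] B, mulAB (mulAB x y) z = mulAB x (mulAB y z)) ∧
      -- idempotent
      (∀ x : A ⊗[k] B,
        x ∈ AddSubmonoid.closure {y : A ⊗[k] B | ∃ u v : A ⊗[k] B, y = mulAB u v}) ∧
      -- non-degenerate
      (∀ x : A ⊗[k] B, (∀ y : A ⊗[k] B, mulAB x y = 0) → x = 0) ∧
      (∀ x : A ⊗[k] B, (∀ y : A ⊗[k] B, mulAB y x = 0) → x = 0) ∧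
      -- k-projective
      Module.Projective k (A ⊗[k] B) := by
  rintro _ rfl
  simp only [Algebra.TensorProduct.map₂_mul_mul_apply]
  exact ⟨Algebra.TensorProduct.tmul_mul_tmul, mul_assoc,
    Algebra.TensorProduct.mem_closure_mul hAid hBid,
    fun _ => Algebra.TensorProduct.eq_zero_of_forall_mul_right_eq_zero hAnd₁ hBnd₁,
    fun _ => Algebra.TensorProduct.eq_zero_of_forall_mul_left_eq_zero hAnd₂ hBnd₂, inferInstance⟩
end

section
/- Let k be a commutative ring and A a non-degenerate k-algebra that is projective as a k-module. If x ∈ A ⊗_k A ⊗_k A satisfies (L_a ⊗ id_A ⊗ id_A)(x) = 0 for all a ∈ A, where L_a : A → A is left multiplication by a, then x = 0. -/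
/-!
Since `A ⊗ A` is projective, `x` vanishes as soon as every contraction `(id ⊗ f) x ∈ A`, for
`f` a functional on `A ⊗ A`, does. Contraction commutes with `L_a ⊗ id`, so `a · (id ⊗ f) x = 0`
for every `a`, and non-degeneracy gives `(id ⊗ f) x = 0`.
-/

open TensorProduct

namespace Module.Projective

variable {R M N : Type*} [CommSemiring R] [AddCommMonoid M] [AddCommMonoid N]
  [Module R M] [Module R N]

/- `M` is a retract of the free module `M →₀ R`, and elements of `N ⊗ (M →₀ R) ≃ (M →₀ N)` are
detected coordinatewise. -/
theorem eq_zero_of_forall_rid_lTensor_eq_zero [Module.Projective R M] (y : N ⊗[R] M)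
    (hy : ∀ f : Module.Dual R M, TensorProduct.rid R N (f.lTensor N y) = 0) : y = 0 := by
  classical
  obtain ⟨s, hs⟩ := Module.projective_def'.mp ‹Module.Projective R M›
  have hsy : s.lTensor N y = 0 := by
    refine (finsuppScalarRight R R N M).map_eq_zero_iff.mp (Finsupp.ext fun c => ?_)
    rw [finsuppScalarRight_apply, AlgebraTensorModule.rid_eq_rid, ← LinearMap.comp_apply,
      ← LinearMap.lTensor_comp]
    exact hy _
  calc y = (Finsupp.linearCombination R id).lTensor N (s.lTensor N y) := by
        rw [← LinearMap.comp_apply, ← LinearMap.lTensor_comp, hs, LinearMap.lTensor_id,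
          LinearMap.id_apply]
    _ = 0 := by rw [hsy, map_zero]

end Module.Projective

theorem TensorProduct.rid_lTensor_rTensor {R M N N' : Type*} [CommSemiring R]
    [AddCommMonoid M] [AddCommMonoid N] [AddCommMonoid N'] [Module R M] [Module R N]
    [Module R N'] (f : M →ₗ[R] R) (φ : N →ₗ[R] N') (y : N ⊗[R] M) :
    TensorProduct.rid R N' (f.lTensor N' (φ.rTensor M y)) =
      φ (TensorProduct.rid R N (f.lTensor N y)) := by
  induction y using TensorProduct.induction_on with
  | zero => simp only [map_zero]
  | tmul n m => simp
  | add y z hy hz => simp only [map_add, hy, hz]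

theorem stmt_13_general (k : Type*) [CommRing k]
    (A : Type*) [NonUnitalRing A] [Module k A] [SMulCommClass k A A] [IsScalarTower k A A]
    [Module.Projective k A]
    (hnd₂ : ∀ a : A, (∀ b : A, b * a = 0) → a = 0) :
    ∀ x : A ⊗[k] (A ⊗[k] A),
      (∀ a : A,
        TensorProduct.map (LinearMap.mulLeft k a)
          (LinearMap.id : A ⊗[k] A →ₗ[k] A ⊗[k] A) x = 0) →
      x = 0 := by
  intro x hx
  refine Module.Projective.eq_zero_of_forall_rid_lTensor_eq_zero x fun f => hnd₂ _ fun a => ?_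
  rw [← LinearMap.mulLeft_apply k, ← rid_lTensor_rTensor, LinearMap.rTensor_def, hx a,
    map_zero, map_zero]

/-- Let `A` be a non-degenerate k-algebra which is projective as a
k-module.  If `x ∈ A ⊗ A ⊗ A` satisfies `(L_a ⊗ id ⊗ id)(x) = 0` for all `a ∈ A`, where
`L_a` is left multiplication by `a`, then `x = 0`. -/
theorem stmt_13 (k : Type*) [CommRing k]
    (A : Type*) [NonUnitalRing A] [Module k A] [SMulCommClass k A A] [IsScalarTower k A A]
    [Module.Projective k A]
    (hnd₁ : ∀ a : A, (∀ b : A, a * b = 0) → a = 0)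
    (hnd₂ : ∀ a : A, (∀ b : A, b * a = 0) → a = 0) :
    ∀ x : A ⊗[k] (A ⊗[k] A),
      (∀ a : A,
        TensorProduct.map (LinearMap.mulLeft k a)
          (LinearMap.id : A ⊗[k] A →ₗ[k] A ⊗[k] A) x = 0) →
      x = 0 :=
  stmt_13_general k A hnd₂
end
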